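/- arXiv:math/0108042 — 5 statements merged into one kernel-verified Lean document; each statement's English description precedes it below -/
import Mathlib

section
/- Let ℓ ≥ 0 and n ≤ 0 be integers, and for 0 ≤ i ≤ ℓ define h_i : (0,∞) → ℝ by h_i(r) = (1+r²)^n · Σ_{j=0}^{min(−n, ℓ−i)} (−1)^j · binom(−n, j) · binom(ℓ−i, j) · r^{2j}. Then (h_0, …, h_ℓ) satisfies system (S1) with eigenvalue λ = 4n(ℓ+2) and system (S2) with eigenvalue μ = 4n(ℓ+2)(n−ℓ), for all r > 0. -/
/-!
Write `k = -n`, `m = ℓ - i` and `S_m(x) = ∑ⱼ (-1)ʲ C(k,j) C(m,j) xʲ = ₂F₁(-k, -m; 1; -x)`,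
so that `h_i = F_m` with `F_m(r) = (1 + r²)^(-k) S_m(r²)`. Two contiguous relations of `S_m`
give the ladder `r (1 + r²) F_m' = 2 (m + 1) (F_{m+1} - F_m)` and a three-term recurrence in `m`.
Differentiating the ladder once more expresses `F_m''` through the same ladder, so both systems
become linear identities among `F_{m-1}, …, F_{m+2}` that follow from the recurrence at `m - 1`
and `m`.
-/

open Finset

theorem Nat.cast_choose_succ_right_eq {R : Type*} [CommRing R] (k j : ℕ) :
    (k.choose (j + 1) : R) * (j + 1) = k.choose j * (k - j) := by
  rcases le_or_gt j k with hjk | hjk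
  · have h := congrArg (Nat.cast (R := R)) (Nat.choose_succ_right_eq k j)
    push_cast [Nat.cast_sub hjk] at h
    exact h
  · simp [Nat.choose_eq_zero_of_lt hjk, Nat.choose_eq_zero_of_lt (Nat.lt_succ_of_lt hjk)]

theorem Nat.cast_add_one_mul_choose_eq {R : Type*} [CommRing R] (m t : ℕ) :
    ((m : R) + 1) * m.choose t = (m + 1).choose (t + 1) * (t + 1) := by
  simpa using congrArg (Nat.cast (R := R)) (Nat.add_one_mul_choose_eq m t)

noncomputable def binomSum (k m : ℕ) (x : ℝ) : ℝ :=
  ∑ j ∈ range (k + 1), (-1) ^ j * k.choose j * m.choose j * x ^ j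

noncomputable def binomSumDeriv (k m : ℕ) (x : ℝ) : ℝ :=
  ∑ j ∈ range (k + 1), (-1) ^ j * k.choose j * m.choose j * (j * x ^ (j - 1))

theorem binomSum_eq_sum_range_min (k m : ℕ) (x : ℝ) :
    binomSum k m x = ∑ j ∈ range (min k m + 1), (-1) ^ j * k.choose j * m.choose j * x ^ j := by
  refine (sum_subset (range_subset_range.2 (by omega)) fun j hj hjm => ?_).symm
  simp only [mem_range] at hj hjm
  simp [Nat.choose_eq_zero_of_lt (show m < j by omega)]

theorem hasDerivAt_binomSum (k m : ℕ) (x : ℝ) :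
    HasDerivAt (binomSum k m) (binomSumDeriv k m x) x := by
  unfold binomSum binomSumDeriv
  exact HasDerivAt.fun_sum fun j _ => (hasDerivAt_pow j x).const_mul _

theorem binomSumDeriv_zero_right (k : ℕ) (x : ℝ) : binomSumDeriv k 0 x = 0 :=
  sum_eq_zero fun j _ => by cases j <;> simp

theorem mul_binomSumDeriv_succ (k m : ℕ) (x : ℝ) :
    x * binomSumDeriv k (m + 1) x = (m + 1) * (binomSum k (m + 1) x - binomSum k m x) := by
  simp only [binomSum, binomSumDeriv, mul_sum, ← sum_sub_distrib]
  refine sum_congr rfl fun j _ => ?_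
  cases j with
  | zero => simp
  | succ t =>
    have hmul := Nat.cast_add_one_mul_choose_eq (R := ℝ) m t
    have hpascal := congrArg (Nat.cast (R := ℝ)) (Nat.choose_succ_succ m t)
    push_cast at hpascal ⊢
    linear_combination
      -(-1) ^ (t + 1) * (k.choose (t + 1) : ℝ) * x ^ (t + 1) * (hmul + (m + 1) * hpascal)

theorem binomSum_contiguous (k m : ℕ) (x : ℝ) :
    x * ((1 + x) * binomSumDeriv k m x - k * binomSum k m x)
      = (m + 1) * (binomSum k (m + 1) x - binomSum k m x) := by
  set T : ℕ → ℝ := fun j => (-1) ^ j * j * k.choose j * m.choose (j - 1) * x ^ j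
  rw [← sub_eq_zero]
  calc _ = ∑ j ∈ range (k + 1), (T (j + 1) - T j) := by
        simp only [binomSum, binomSumDeriv, mul_sum, ← sum_sub_distrib]
        refine sum_congr rfl fun j _ => ?_
        cases j with
        | zero => simp [T]; ring
        | succ t =>
          have hk := Nat.cast_choose_succ_right_eq (R := ℝ) k (t + 1)
          have hmul := Nat.cast_add_one_mul_choose_eq (R := ℝ) m t
          have hpascal := congrArg (Nat.cast (R := ℝ)) (Nat.choose_succ_succ m t)
          simp only [T, Nat.add_sub_cancel]
          push_cast at hk hpascal ⊢
          linear_combination (-1) ^ (t + 1) * (m.choose (t + 1) : ℝ) * x ^ (t + 2) * hk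
            - (-1) ^ (t + 1) * (k.choose (t + 1) : ℝ) * x ^ (t + 1)
              * (hmul + (m + t + 2) * hpascal)
    _ = 0 := by rw [sum_range_sub]; simp [T]

/-- At `m = 0` the truncated `m - 1` is harmless: that term carries the factor `m`. -/
theorem binomSum_recurrence (k m : ℕ) (x : ℝ) :
    (m + 1) * (binomSum k (m + 1) x - binomSum k m x)
      = (1 + x) * m * (binomSum k m x - binomSum k (m - 1) x) - k * x * binomSum k m x := by
  cases m with
  | zero =>
    have h := binomSum_contiguous k 0 x
    rw [binomSumDeriv_zero_right] at h
    push_cast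
    linear_combination -h
  | succ j =>
    have hcont := binomSum_contiguous k (j + 1) x
    have hderiv := mul_binomSumDeriv_succ k j x
    push_cast at hcont ⊢
    linear_combination (1 + x) * hderiv - hcont

/-- `h_i = radialProfile (-n) (ℓ - i)`. -/
noncomputable def radialProfile (k m : ℕ) (r : ℝ) : ℝ :=
  (1 + r ^ 2) ^ (-(k : ℤ)) * binomSum k m (r ^ 2)

theorem hasDerivAt_radialProfile (k m : ℕ) {r : ℝ} (hr : r ≠ 0) :
    HasDerivAt (radialProfile k m)
      (2 * (m + 1) * (radialProfile k (m + 1) r - radialProfile k m r) / (r * (1 + r ^ 2))) r := by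
  have hc : (1 : ℝ) + r ^ 2 ≠ 0 := by positivity
  have hsq : HasDerivAt (fun y : ℝ => 1 + y ^ 2) (2 * r) r := by
    simpa using (hasDerivAt_pow 2 r).const_add 1
  have hpow := (hasDerivAt_zpow (-(k : ℤ)) _ (Or.inl hc)).comp r hsq
  have hsum := (hasDerivAt_binomSum k m (r ^ 2)).comp r (hasDerivAt_pow 2 r)
  refine (hpow.mul hsum).congr_deriv ?_
  have hcont := binomSum_contiguous k m (r ^ 2)
  simp only [radialProfile, Function.comp_apply, zpow_sub_one₀ hc]
  push_cast
  field_simp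
  linear_combination hcont

theorem radialProfile_recurrence (k m : ℕ) (r : ℝ) :
    (m + 1) * (radialProfile k (m + 1) r - radialProfile k m r)
      = (1 + r ^ 2) * m * (radialProfile k m r - radialProfile k (m - 1) r)
        - k * r ^ 2 * radialProfile k m r := by
  simp only [radialProfile]
  linear_combination (1 + r ^ 2) ^ (-(k : ℤ)) * binomSum_recurrence k m (r ^ 2)

theorem mul_deriv_radialProfile (k m : ℕ) {r : ℝ} (hr : r ≠ 0) :
    r * (1 + r ^ 2) * deriv (radialProfile k m) r
      = 2 * (m + 1) * (radialProfile k (m + 1) r - radialProfile k m r) := by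
  rw [(hasDerivAt_radialProfile k m hr).deriv]
  field_simp

theorem mul_deriv_deriv_radialProfile (k m : ℕ) {r : ℝ} (hr : r ≠ 0) :
    r * (1 + r ^ 2) * deriv (deriv (radialProfile k m)) r
        + (1 + 3 * r ^ 2) * deriv (radialProfile k m) r
      = 2 * (m + 1) * (deriv (radialProfile k (m + 1)) r - deriv (radialProfile k m) r) := by
  have hc : (1 : ℝ) + r ^ 2 ≠ 0 := by positivity
  have hderiv : deriv (radialProfile k m) =ᶠ[nhds r] fun y =>
      2 * (m + 1) * (radialProfile k (m + 1) y - radialProfile k m y) / (y * (1 + y ^ 2)) := by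
    filter_upwards [isOpen_ne.mem_nhds hr] with y hy using (hasDerivAt_radialProfile k m hy).deriv
  have hnum := (((hasDerivAt_radialProfile k (m + 1) hr).differentiableAt.hasDerivAt).fun_sub
    (hasDerivAt_radialProfile k m hr).differentiableAt.hasDerivAt).const_mul (2 * ((m : ℝ) + 1))
  have hden : HasDerivAt (fun y : ℝ => y * (1 + y ^ 2)) (1 + 3 * r ^ 2) r :=
    ((hasDerivAt_id' r).fun_mul ((hasDerivAt_pow 2 r).const_add 1)).congr_deriv (by norm_num; ring)
  rw [hderiv.deriv_eq, (hnum.fun_div hden (mul_ne_zero hr hc)).deriv,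
    (hasDerivAt_radialProfile k m hr).deriv]
  field_simp
  ring

theorem system1_of_relations {n ℓ i k m r v v₁ v₂ w w₁ z u p : ℝ} (hr : r ≠ 0)
    (hn : n = -k) (hℓ : ℓ = i + m)
    (hv₁ : r * (1 + r ^ 2) * v₁ = 2 * (m + 1) * (w - v))
    (hv₂ : r * (1 + r ^ 2) * v₂ + (1 + 3 * r ^ 2) * v₁ = 2 * (m + 1) * (w₁ - v₁))
    (hw₁ : r * (1 + r ^ 2) * w₁ = 2 * (m + 2) * (z - w))
    (hz : (m + 2) * (z - w) = (1 + r ^ 2) * (m + 1) * (w - v) - k * r ^ 2 * w)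
    (hu : (m + 1) * (w - v) = (1 + r ^ 2) * m * (v - u) - k * r ^ 2 * v)
    (hp : i * (p - w) = 0) :
    (1 + r ^ 2) ^ 2 * v₂
        + ((1 + r ^ 2) / r) * (3 + r ^ 2 - 2 * r ^ 2 * (n + ℓ - i)) * v₁
        - 4 * i * (ℓ - i + 1) * (p - v)
        + (4 * (1 + r ^ 2) / r ^ 2) *
            ((i + 1) * (ℓ - i) * (u - v) + i * (ℓ - i + 1) * (p - v))
        = (4 * n * (ℓ + 2)) * v := by
  subst hn hℓ
  -- the coefficients come from eliminating `v₂, w₁, v₁, z, p, u` in turn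
  linear_combination (norm := skip) ((1 + r ^ 2) / r) * hv₂ + 2 * (m + 1) / r ^ 2 * hw₁
    + 2 * (r ^ 2 * (k - m - 1) - m) / r ^ 2 * hv₁ + 4 * (m + 1) / r ^ 2 * hz
    + 4 * (m + 1) / r ^ 2 * hp + 4 * (i + 1) / r ^ 2 * hu
  field_simp
  ring

theorem system2_of_relations {n ℓ i k m r v v₁ v₂ w w₁ z u u₁ p p₁ : ℝ} (hr : r ≠ 0)
    (hn : n = -k) (hℓ : ℓ = i + m)
    (hv₁ : r * (1 + r ^ 2) * v₁ = 2 * (m + 1) * (w - v))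
    (hv₂ : r * (1 + r ^ 2) * v₂ + (1 + 3 * r ^ 2) * v₁ = 2 * (m + 1) * (w₁ - v₁))
    (hw₁ : r * (1 + r ^ 2) * w₁ = 2 * (m + 2) * (z - w))
    (hz : (m + 2) * (z - w) = (1 + r ^ 2) * (m + 1) * (w - v) - k * r ^ 2 * w)
    (hu : (m + 1) * (w - v) = (1 + r ^ 2) * m * (v - u) - k * r ^ 2 * v)
    (hu₁ : m * (r * (1 + r ^ 2) * u₁ - 2 * m * (v - u)) = 0)
    (hp : i * (p - w) = 0) (hp₁ : i * (p₁ - w₁) = 0) :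
    (n - ℓ + 3 * i) * (1 + r ^ 2) ^ 2 * v₂
        + 6 * (i + 1) * (ℓ - i) * ((1 + r ^ 2) ^ 2 / r) * u₁
        - 6 * i * (ℓ - i + 1) * ((1 + r ^ 2) / r) * p₁
        + (n - ℓ + 3 * i) * ((1 + r ^ 2) / r)
            * (3 + r ^ 2 - 2 * r ^ 2 * (n + ℓ - i)) * v₁
        + 4 * (n + 2 * ℓ - 3 * i) * ((1 + r ^ 2) / r ^ 2) *
            ((i + 1) * (ℓ - i) * (u - v) + i * (ℓ - i + 1) * (p - v))
        + 4 * i * (ℓ - i + 1) * (2 * n + ℓ + 3) * (p - v)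
        = (4 * n * (ℓ + 2) * (n - ℓ)) * v := by
  subst hn hℓ
  linear_combination (norm := skip) (1 + r ^ 2) * (2 * i - k - m) / r * hv₂
    - 6 * (1 + r ^ 2) * (m + 1) / r * hp₁ - 2 * (m + 1) * (k + m + i) / r ^ 2 * hw₁
    + 6 * (i + 1) * (1 + r ^ 2) / r ^ 2 * hu₁
    + 2 * (m + k - 2 * i) * (r ^ 2 * (m - k + 1) + m) / r ^ 2 * hv₁
    - 4 * (m + 1) * (k + m + i) / r ^ 2 * hz
    + 4 * (m + 1) * (3 * r ^ 2 * (m + 1 - k) + 2 * m - k - i) / r ^ 2 * hp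
    - 4 * (i + 1) * (k + m + i) / r ^ 2 * hu
  field_simp
  ring

theorem radialProfile_relations (k m : ℕ) {r : ℝ} (hr : r ≠ 0) :
    r * (1 + r ^ 2) * deriv (radialProfile k m) r
        = 2 * (m + 1) * (radialProfile k (m + 1) r - radialProfile k m r) ∧
      r * (1 + r ^ 2) * deriv (deriv (radialProfile k m)) r
          + (1 + 3 * r ^ 2) * deriv (radialProfile k m) r
        = 2 * (m + 1) * (deriv (radialProfile k (m + 1)) r - deriv (radialProfile k m) r) ∧
      r * (1 + r ^ 2) * deriv (radialProfile k (m + 1)) r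
        = 2 * (m + 2) * (radialProfile k (m + 2) r - radialProfile k (m + 1) r) ∧
      (m + 2) * (radialProfile k (m + 2) r - radialProfile k (m + 1) r)
        = (1 + r ^ 2) * (m + 1) * (radialProfile k (m + 1) r - radialProfile k m r)
          - k * r ^ 2 * radialProfile k (m + 1) r := by
  have hw₁ := mul_deriv_radialProfile k (m + 1) hr
  have hz := radialProfile_recurrence k (m + 1) r
  push_cast at hw₁ hz
  refine ⟨mul_deriv_radialProfile k m hr, mul_deriv_deriv_radialProfile k m hr, ?_, ?_⟩
  · linear_combination hw₁
  · simpa only [Nat.add_sub_cancel, add_assoc, one_add_one_eq_two] using hz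

/-- The neighbour facts carry the factors `i` and `m`: `h (i - 1)` is `h 0` when `i = 0`, and
`h (ℓ + 1)` is unconstrained. -/
theorem radialProfile_family_relations {k i m : ℕ} {h : ℕ → ℝ → ℝ}
    (hh : ∀ j ≤ i + m, h j = radialProfile k (i + m - j)) {r : ℝ} (hr : r ≠ 0) :
    h i = radialProfile k m ∧
      (i : ℝ) * (h (i - 1) r - radialProfile k (m + 1) r) = 0 ∧
      (i : ℝ) * (deriv (h (i - 1)) r - deriv (radialProfile k (m + 1)) r) = 0 ∧
      (m + 1) * (radialProfile k (m + 1) r - radialProfile k m r)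
        = (1 + r ^ 2) * m * (radialProfile k m r - h (i + 1) r)
          - k * r ^ 2 * radialProfile k m r ∧
      m * (r * (1 + r ^ 2) * deriv (h (i + 1)) r - 2 * m * (radialProfile k m r - h (i + 1) r))
        = 0 := by
  have hup : i = 0 ∨ h (i - 1) = radialProfile k (m + 1) := by
    rcases i with _ | j
    · exact .inl rfl
    · exact .inr (by rw [Nat.add_sub_cancel, hh j (by omega)]; congr 1; omega)
  refine ⟨by simpa using hh i (by omega), ?_, ?_, ?_⟩
  · rcases hup with rfl | hup <;> simp [*]
  · rcases hup with rfl | hup <;> simp [*]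
  rcases m with _ | j
  · simpa using radialProfile_recurrence k 0 r
  · rw [hh (i + 1) (by omega), show i + (j + 1) - (i + 1) = j by omega]
    have hv₁ := mul_deriv_radialProfile k j hr
    have hrec := radialProfile_recurrence k (j + 1) r
    rw [Nat.add_sub_cancel] at hrec
    push_cast at hv₁ hrec ⊢
    exact ⟨hrec, by linear_combination (↑j + 1) * hv₁⟩

/-- For `n ≤ 0`, the explicit functions
`h_i(r) = (1+r²)^n · Σ_{j=0}^{min(−n,ℓ−i)} (−1)^j C(−n,j) C(ℓ−i,j) r^{2j}`
satisfy system (S1) with eigenvalue `λ = 4n(ℓ+2)` and system (S2) with eigenvalue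
`μ = 4n(ℓ+2)(n−ℓ)` for all `r > 0`.  (Terms involving `h_{i−1}` or `h_{i+1}` out of
range carry coefficient zero.) -/
theorem stmt5 (n : ℤ) (hn : n ≤ 0) (ℓ : ℕ) (h : ℕ → ℝ → ℝ)
    (hdef : ∀ i ≤ ℓ, ∀ r : ℝ,
      h i r = (1 + r ^ 2) ^ (n : ℤ) *
        ∑ j ∈ Finset.range (min (-n).toNat (ℓ - i) + 1),
          (-1 : ℝ) ^ j * ((-n).toNat.choose j) * ((ℓ - i).choose j) * r ^ (2 * j)) :
    (∀ i ≤ ℓ, ∀ r : ℝ, 0 < r →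
      (1 + r ^ 2) ^ 2 * deriv (deriv (h i)) r
        + ((1 + r ^ 2) / r) * (3 + r ^ 2 - 2 * r ^ 2 * ((n : ℝ) + ℓ - i)) * deriv (h i) r
        - 4 * i * ((ℓ : ℝ) - i + 1) * (h (i - 1) r - h i r)
        + (4 * (1 + r ^ 2) / r ^ 2) *
            (((i : ℝ) + 1) * ((ℓ : ℝ) - i) * (h (i + 1) r - h i r)
              + (i : ℝ) * ((ℓ : ℝ) - i + 1) * (h (i - 1) r - h i r))
        = (4 * (n : ℝ) * ((ℓ : ℝ) + 2)) * h i r) ∧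
    (∀ i ≤ ℓ, ∀ r : ℝ, 0 < r →
      ((n : ℝ) - ℓ + 3 * i) * (1 + r ^ 2) ^ 2 * deriv (deriv (h i)) r
        + 6 * ((i : ℝ) + 1) * ((ℓ : ℝ) - i) * ((1 + r ^ 2) ^ 2 / r) * deriv (h (i + 1)) r
        - 6 * (i : ℝ) * ((ℓ : ℝ) - i + 1) * ((1 + r ^ 2) / r) * deriv (h (i - 1)) r
        + ((n : ℝ) - ℓ + 3 * i) * ((1 + r ^ 2) / r)
            * (3 + r ^ 2 - 2 * r ^ 2 * ((n : ℝ) + ℓ - i)) * deriv (h i) r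
        + 4 * ((n : ℝ) + 2 * ℓ - 3 * i) * ((1 + r ^ 2) / r ^ 2) *
            (((i : ℝ) + 1) * ((ℓ : ℝ) - i) * (h (i + 1) r - h i r)
              + (i : ℝ) * ((ℓ : ℝ) - i + 1) * (h (i - 1) r - h i r))
        + 4 * (i : ℝ) * ((ℓ : ℝ) - i + 1) * (2 * (n : ℝ) + ℓ + 3) * (h (i - 1) r - h i r)
        = (4 * (n : ℝ) * ((ℓ : ℝ) + 2) * ((n : ℝ) - ℓ)) * h i r) := by
  obtain ⟨k, rfl⟩ : ∃ k : ℕ, n = -k := ⟨(-n).toNat, by omega⟩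
  have hh : ∀ j ≤ ℓ, h j = radialProfile k (ℓ - j) := fun j hj => funext fun r => by
    simp [hdef j hj r, radialProfile, binomSum_eq_sum_range_min, pow_mul]
  refine ⟨fun i hi r hr => ?_, fun i hi r hr => ?_⟩
  all_goals
    obtain ⟨m, rfl⟩ := Nat.exists_eq_add_of_le hi
    obtain ⟨hv, hp, hp₁, hu, hu₁⟩ := radialProfile_family_relations hh hr.ne'
    obtain ⟨hv₁, hv₂, hw₁, hz⟩ := radialProfile_relations k m hr.ne'
    rw [hv]
  · exact system1_of_relations hr.ne' (by push_cast; ring) (by push_cast; ring)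
      hv₁ hv₂ hw₁ hz hu hp
  · exact system2_of_relations hr.ne' (by push_cast; ring) (by push_cast; ring)
      hv₁ hv₂ hw₁ hz hu hu₁ hp hp₁
end

section
/- Let n ∈ ℤ, ℓ ≥ 0 an integer, and λ ∈ ℂ. Suppose h_0, …, h_ℓ : ℝ → ℂ are C^∞ functions satisfying system (S1) with eigenvalue λ for all r > 0. Then h_0(0) = h_1(0) = ⋯ = h_ℓ(0). -/
/-- If `h_0, …, h_ℓ : ℝ → ℂ` are `C^∞` functions satisfying system (S1) with eigenvalue
`λ` for all `r > 0`, then `h_0(0) = h_1(0) = ⋯ = h_ℓ(0)`. -/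
theorem stmt6 (n : ℤ) (ℓ : ℕ) (lam : ℂ) (h : ℕ → ℝ → ℂ)
    (hsmooth : ∀ i ≤ ℓ, ContDiff ℝ (⊤ : ℕ∞) (h i))
    (heq : ∀ i ≤ ℓ, ∀ r : ℝ, 0 < r →
      (1 + (r : ℂ) ^ 2) ^ 2 * deriv (deriv (h i)) r
        + ((1 + (r : ℂ) ^ 2) / r) *
            (3 + (r : ℂ) ^ 2 - 2 * (r : ℂ) ^ 2 * ((n : ℂ) + ℓ - i)) * deriv (h i) r
        - 4 * (i : ℂ) * ((ℓ : ℂ) - i + 1) * (h (i - 1) r - h i r)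
        + (4 * (1 + (r : ℂ) ^ 2) / (r : ℂ) ^ 2) *
            (((i : ℂ) + 1) * ((ℓ : ℂ) - i) * (h (i + 1) r - h i r)
              + (i : ℂ) * ((ℓ : ℂ) - i + 1) * (h (i - 1) r - h i r))
        = lam * h i r) :
    ∀ i ≤ ℓ, h i 0 = h 0 0 := by
  have key : ∀ i ≤ ℓ,
      ((i:ℂ)+1)*((ℓ:ℂ)-i)*(h (i+1) 0 - h i 0)
        + (i:ℂ)*((ℓ:ℂ)-i+1)*(h (i-1) 0 - h i 0) = 0 := by
    intro i hi
    have hc0 : Continuous (h i) := (hsmooth i hi).continuous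
    have hsm : ContDiff ℝ (⊤ : ℕ∞) (h i) := (hsmooth i hi).of_le (by simp)
    have hd : ContDiff ℝ (⊤ : ℕ∞) (deriv (h i)) := (contDiff_infty_iff_deriv.mp hsm).2
    have hc1 : Continuous (deriv (h i)) := hd.continuous
    have hc2 : Continuous (deriv (deriv (h i))) := (contDiff_infty_iff_deriv.mp hd).2.continuous
    have hcm : Continuous (h (i-1)) := (hsmooth (i-1) (le_trans (Nat.sub_le i 1) hi)).continuous
    set T : ℝ → ℂ := fun r => ((i:ℂ)+1)*((ℓ:ℂ)-i)*(h (i+1) r - h i r) with hT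
    have hcT : Continuous T := by
      rcases lt_or_eq_of_le hi with hlt | heqi
      · have : Continuous (h (i+1)) := (hsmooth (i+1) hlt).continuous
        fun_prop
      · have : T = fun _ => 0 := by
          funext r; simp [hT, heqi, sub_self]
        rw [this]; exact continuous_const
    set G : ℝ → ℂ := fun r =>
      (r:ℂ)^2*(1+(r:ℂ)^2)^2 * deriv (deriv (h i)) r
      + (r:ℂ)*(1+(r:ℂ)^2)*(3+(r:ℂ)^2-2*(r:ℂ)^2*((n:ℂ)+ℓ-i)) * deriv (h i) r
      - 4*(i:ℂ)*((ℓ:ℂ)-i+1)*(r:ℂ)^2*(h (i-1) r - h i r)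
      + 4*(1+(r:ℂ)^2)*(T r + (i:ℂ)*((ℓ:ℂ)-i+1)*(h (i-1) r - h i r))
      - lam*(r:ℂ)^2* h i r with hG
    have hcG : Continuous G := by fun_prop
    have hGzero : ∀ r : ℝ, 0 < r → G r = 0 := by
      intro r hr
      have e := heq i hi r hr
      have hr' : (r:ℂ) ≠ 0 := by
        simpa using Complex.ofReal_ne_zero.mpr (ne_of_gt hr)
      field_simp at e
      have hm : (r:ℂ) * G r = 0 := by
        simp only [hG, hT]
        linear_combination (r:ℂ) * e
      rcases mul_eq_zero.mp hm with h' | h'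
      · exact absurd h' hr'
      · exact h'
    have h0 : G 0 = 0 := by
      have t1 : Filter.Tendsto G (nhdsWithin 0 (Set.Ioi 0)) (nhds (G 0)) :=
        (hcG.continuousAt.continuousWithinAt).tendsto
      have t2 : Filter.Tendsto G (nhdsWithin 0 (Set.Ioi 0)) (nhds 0) := by
        apply Filter.Tendsto.congr' _ tendsto_const_nhds
        filter_upwards [self_mem_nhdsWithin] with r hr
        exact (hGzero r hr).symm
      exact tendsto_nhds_unique t1 t2
    have : (4:ℂ)*(T 0 + (i:ℂ)*((ℓ:ℂ)-i+1)*(h (i-1) 0 - h i 0)) = 0 := by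
      simp only [hG] at h0
      push_cast at h0
      linear_combination h0
    simp only [hT] at this
    linear_combination this / 4
  intro i
  induction i using Nat.strong_induction_on with
  | _ i IH =>
    intro hi
    match i with
    | 0 => rfl
    | Nat.succ k =>
      have hk : k ≤ ℓ := le_of_lt (Nat.lt_of_succ_le hi)
      have hklt : k < ℓ := Nat.lt_of_succ_le hi
      have e := key k hk
      have hak : h k 0 = h 0 0 := IH k (Nat.lt_succ_self k) hk
      have hak1 : h (k-1) 0 = h 0 0 := IH (k-1) (by omega) (by omega)
      rw [hak, hak1] at e
      have c1 : ((k:ℂ)+1) ≠ 0 := by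
        have := Nat.cast_add_one_ne_zero (R := ℂ) k; exact_mod_cast this
      have c2 : ((ℓ:ℂ)-(k:ℂ)) ≠ 0 := by
        rw [sub_ne_zero]
        exact_mod_cast (Nat.cast_injective.ne (by omega : ℓ ≠ k))
      have : h (k+1) 0 - h 0 0 = 0 := by
        have e' : ((k:ℂ)+1)*((ℓ:ℂ)-k)*(h (k+1) 0 - h 0 0) = 0 := by
          linear_combination e
        rcases mul_eq_zero.mp e' with h' | h'
        · exact absurd h' (mul_ne_zero c1 c2)
        · exact h'
      exact sub_eq_zero.mp this
end

section
/- Assume n ≥ 0 and let λ, μ ∈ ℂ. If a sequence (H_j)_{j≥0} in ℂ^{ℓ+1} satisfies recursion (R1) with parameter λ and recursion (R2) with parameter μ, and is not identically zero, then H_0 ≠ 0 and L(λ)·H_0 = μ·H_0; in particular μ is an eigenvalue of the matrix L(λ). -/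
open Matrix

noncomputable def matA0 (n : ℤ) (ℓ : ℕ) : Matrix (Fin (ℓ + 1)) (Fin (ℓ + 1)) ℂ :=
  Matrix.diagonal fun i => (n : ℂ) + ℓ - i + 1

noncomputable def matA1 (n : ℤ) (ℓ : ℕ) : Matrix (Fin (ℓ + 1)) (Fin (ℓ + 1)) ℂ :=
  Matrix.diagonal fun i => (n : ℂ) + ℓ - i + 3

noncomputable def matB0 (ℓ : ℕ) : Matrix (Fin (ℓ + 1)) (Fin (ℓ + 1)) ℂ :=
  Matrix.of fun i j => ((i : ℂ) + 1) * ((ℓ : ℂ) - i) *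
    ((if (j : ℕ) = (i : ℕ) + 1 then 1 else 0) - if j = i then 1 else 0)

noncomputable def matB1 (ℓ : ℕ) : Matrix (Fin (ℓ + 1)) (Fin (ℓ + 1)) ℂ :=
  Matrix.of fun i j => (i : ℂ) * ((ℓ : ℂ) - i + 1) *
    ((if j = i then 1 else 0) - if (j : ℕ) + 1 = (i : ℕ) then 1 else 0)

noncomputable def matM (n : ℤ) (ℓ : ℕ) : Matrix (Fin (ℓ + 1)) (Fin (ℓ + 1)) ℂ :=
  Matrix.diagonal fun i => (n : ℂ) - ℓ + 3 * i

noncomputable def matC0 (n : ℤ) (ℓ : ℕ) : Matrix (Fin (ℓ + 1)) (Fin (ℓ + 1)) ℂ :=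
  Matrix.of fun i j =>
    ((n : ℂ) - ℓ + 3 * i) * ((n : ℂ) + ℓ - i + 1) * (if j = i then 1 else 0)
      - 3 * ((i : ℂ) + 1) * ((ℓ : ℂ) - i) * (if (j : ℕ) = (i : ℕ) + 1 then 1 else 0)

noncomputable def matC1 (n : ℤ) (ℓ : ℕ) : Matrix (Fin (ℓ + 1)) (Fin (ℓ + 1)) ℂ :=
  Matrix.of fun i j =>
    ((n : ℂ) - ℓ + 3 * i) * ((n : ℂ) + ℓ - i + 3) * (if j = i then 1 else 0)
      - 3 * (i : ℂ) * ((ℓ : ℂ) - i + 1) * (if (j : ℕ) + 1 = (i : ℕ) then 1 else 0)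

noncomputable def matD0 (n : ℤ) (ℓ : ℕ) : Matrix (Fin (ℓ + 1)) (Fin (ℓ + 1)) ℂ :=
  Matrix.of fun i j =>
    ((n : ℂ) + 2 * ℓ - 3 * i) * ((i : ℂ) + 1) * ((ℓ : ℂ) - i) *
        ((if (j : ℕ) = (i : ℕ) + 1 then 1 else 0) - if j = i then 1 else 0)
      - 3 * ((n : ℂ) + ℓ - i + 1) * (i : ℂ) * ((ℓ : ℂ) - i + 1) *
        ((if j = i then 1 else 0) - if (j : ℕ) + 1 = (i : ℕ) then 1 else 0)

noncomputable def matD1 (n : ℤ) (ℓ : ℕ) : Matrix (Fin (ℓ + 1)) (Fin (ℓ + 1)) ℂ :=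
  Matrix.of fun i j =>
    (2 * (n : ℂ) + ℓ + 3) * (i : ℂ) * ((ℓ : ℂ) - i + 1) *
      ((if j = i then 1 else 0) - if (j : ℕ) + 1 = (i : ℕ) then 1 else 0)

/-- The matrix `L(λ) = D₀ − C₀A₀⁻¹(B₀ − λI)` (defined when `A₀` is invertible). -/
noncomputable def matL (n : ℤ) (ℓ : ℕ) (lam : ℂ) : Matrix (Fin (ℓ + 1)) (Fin (ℓ + 1)) ℂ :=
  matD0 n ℓ - matC0 n ℓ * (matA0 n ℓ)⁻¹ *
    (matB0 ℓ - lam • (1 : Matrix (Fin (ℓ + 1)) (Fin (ℓ + 1)) ℂ))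

/-- Recursion (R1), with the convention `H_{−1} = 0`. -/
def RecR1 (n : ℤ) (ℓ : ℕ) (lam : ℂ) (H : ℕ → Fin (ℓ + 1) → ℂ) : Prop :=
  ∀ j : ℕ,
    (((((j : ℂ) - 1) * ((j : ℂ) - 2) + lam) • (1 : Matrix (Fin (ℓ + 1)) (Fin (ℓ + 1)) ℂ)
        + ((j : ℂ) - 1) • matA1 n ℓ - matB1 ℓ).mulVec (if j = 0 then 0 else H (j - 1)))
      - (((2 * (j : ℂ) * ((j : ℂ) - 1) + lam) • (1 : Matrix (Fin (ℓ + 1)) (Fin (ℓ + 1)) ℂ)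
        + (j : ℂ) • (matA0 n ℓ + matA1 n ℓ) - matB0 ℓ).mulVec (H j))
      + ((((j : ℂ) + 1) • ((j : ℂ) • (1 : Matrix (Fin (ℓ + 1)) (Fin (ℓ + 1)) ℂ)
        + matA0 n ℓ)).mulVec (H (j + 1))) = 0

/-- Recursion (R2), with the convention `H_{−1} = 0`. -/
def RecR2 (n : ℤ) (ℓ : ℕ) (mu : ℂ) (H : ℕ → Fin (ℓ + 1) → ℂ) : Prop :=
  ∀ j : ℕ,
    (((((j : ℂ) - 1) * ((j : ℂ) - 2)) • matM n ℓ + ((j : ℂ) - 1) • matC1 n ℓ + matD1 n ℓ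
        + mu • (1 : Matrix (Fin (ℓ + 1)) (Fin (ℓ + 1)) ℂ)).mulVec
          (if j = 0 then 0 else H (j - 1)))
      + ((((j : ℂ) + 1) • ((j : ℂ) • matM n ℓ + matC0 n ℓ)).mulVec (H (j + 1)))
      - (((2 * (j : ℂ) * ((j : ℂ) - 1)) • matM n ℓ + (j : ℂ) • (matC0 n ℓ + matC1 n ℓ)
        - matD0 n ℓ + mu • (1 : Matrix (Fin (ℓ + 1)) (Fin (ℓ + 1)) ℂ)).mulVec (H j)) = 0

lemma entry_ne (n : ℤ) (hn : 0 ≤ n) (ℓ : ℕ) (k : ℕ) (i : Fin (ℓ+1)) :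
    (k : ℂ) + ((n : ℂ) + ℓ - i + 1) ≠ 0 := by
  have h1 : ((k : ℤ) + (n + ℓ - i + 1) : ℤ) ≠ 0 := by
    have := i.isLt; omega
  have h2 : ((((k : ℤ) + (n + ℓ - i + 1) : ℤ)) : ℂ) ≠ 0 := Int.cast_ne_zero.mpr h1
  push_cast at h2
  convert h2 using 1

lemma diag_form (n : ℤ) (ℓ : ℕ) (c : ℂ) :
    c • (1 : Matrix (Fin (ℓ+1)) (Fin (ℓ+1)) ℂ) + matA0 n ℓ
      = diagonal (fun i : Fin (ℓ+1) => c + ((n : ℂ) + ℓ - i + 1)) := by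
  ext i j
  rcases eq_or_ne i j with rfl | hij
  · simp [matA0, Matrix.diagonal_apply_eq, Matrix.one_apply_eq]
  · simp [matA0, Matrix.diagonal_apply_ne _ hij, Matrix.one_apply_ne hij, hij]

lemma shift_kill (n : ℤ) (hn : 0 ≤ n) (ℓ : ℕ) (k : ℕ) (v : Fin (ℓ+1) → ℂ)
    (h : ((k : ℂ) • (1 : Matrix (Fin (ℓ+1)) (Fin (ℓ+1)) ℂ) + matA0 n ℓ).mulVec v = 0) :
    v = 0 := by
  rw [diag_form] at h
  funext i
  have hh := congrFun h i
  rw [Matrix.mulVec_diagonal] at hh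
  have h2 := entry_ne n hn ℓ k i
  simpa [h2] using hh

/-- For `n ≥ 0`: if `(H_j)_{j≥0}` satisfies (R1) with parameter `λ` and (R2) with
parameter `μ` and is not identically zero, then `H₀ ≠ 0` and `L(λ)H₀ = μH₀`;
in particular `μ` is an eigenvalue of `L(λ)`. -/
theorem stmt10 (n : ℤ) (hn : 0 ≤ n) (ℓ : ℕ) (lam mu : ℂ)
    (H : ℕ → Fin (ℓ + 1) → ℂ)
    (h1 : RecR1 n ℓ lam H) (h2 : RecR2 n ℓ mu H) (hH : H ≠ 0) :
    H 0 ≠ 0 ∧ (matL n ℓ lam).mulVec (H 0) = mu • H 0 := by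
  have e1 := h1 0
  simp only [Nat.cast_zero, if_pos rfl, Matrix.mulVec_zero, zero_sub, zero_smul, zero_add,
    add_zero, one_smul, mul_zero, zero_mul, smul_zero, neg_add_eq_zero, sub_zero] at e1
  -- e1 should now say something like (lam•1 - B0) *ᵥ H 0 = A0 *ᵥ H 1 (shape unknown)
  have e2 := h2 0
  simp only [Nat.cast_zero, if_pos rfl, Matrix.mulVec_zero, zero_sub, zero_smul, zero_add,
    add_zero, one_smul, mul_zero, zero_mul, smul_zero, neg_add_eq_zero, sub_zero] at e2
  simp only [if_true, Matrix.mulVec_zero, zero_sub, zero_add] at e1 e2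
  have eqA : matA0 n ℓ *ᵥ H 1 = (lam • 1 - matB0 ℓ) *ᵥ H 0 := by linear_combination e1
  have eqC : matC0 n ℓ *ᵥ H 1 = (-matD0 n ℓ + mu • 1) *ᵥ H 0 := by linear_combination e2
  have detne : (matA0 n ℓ).det ≠ 0 := by
    rw [matA0, Matrix.det_diagonal]
    refine Finset.prod_ne_zero_iff.mpr fun i _ => ?_
    have := entry_ne n hn ℓ 0 i
    simpa using this
  have hinv : (matA0 n ℓ)⁻¹ * matA0 n ℓ = 1 :=
    Matrix.nonsing_inv_mul _ (isUnit_iff_ne_zero.mpr detne)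
  have main : (matL n ℓ lam).mulVec (H 0) = mu • H 0 := by
    have hB : (matB0 ℓ - lam • 1) *ᵥ H 0 = -(matA0 n ℓ *ᵥ H 1) := by
      rw [eqA, ← Matrix.neg_mulVec, neg_sub]
    rw [matL, Matrix.sub_mulVec, ← Matrix.mulVec_mulVec, ← Matrix.mulVec_mulVec, hB,
      Matrix.mulVec_neg, Matrix.mulVec_mulVec, hinv, Matrix.one_mulVec, Matrix.mulVec_neg,
      eqC, sub_neg_eq_add, Matrix.add_mulVec, Matrix.neg_mulVec]
    simp [Matrix.smul_mulVec]
  refine ⟨?_, main⟩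
  intro h0
  have key : ∀ j, H j = 0 ∧ H (j + 1) = 0 := by
    intro j
    induction j with
    | zero =>
      refine ⟨h0, ?_⟩
      apply shift_kill n hn ℓ 0
      simp only [Nat.cast_zero, zero_smul, zero_add, eqA, h0, Matrix.mulVec_zero]
    | succ j ih =>
      refine ⟨ih.2, ?_⟩
      have e := h1 (j + 1)
      simp only [Nat.add_sub_cancel, Nat.succ_ne_zero, if_false, ih.1, ih.2,
        Matrix.mulVec_zero, zero_sub, zero_add, sub_zero, neg_zero] at e
      rw [Matrix.smul_mulVec] at e
      have hc : ((j + 1 : ℕ) : ℂ) + 1 ≠ 0 := by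
        have : ((j + 1 : ℕ) : ℂ) + 1 = ((j + 2 : ℕ) : ℂ) := by push_cast; ring
        rw [this]
        exact Nat.cast_ne_zero.mpr (by omega)
      rcases smul_eq_zero.mp e with h | h
      · exact absurd h hc
      · exact shift_kill n hn ℓ (j + 1) _ h
  apply hH
  funext j i
  exact congrFun (key j).1 i
end

section
/- Let n ≥ 0 and w ≥ 0 be integers, take ℓ = 1, and set λ = −w(w+n+3) and μ = λ(n−1). Define the polynomials h_1(t) = Σ_{j=0}^{w} [(−w)_j (w+n+3)_j / (j! (n+1)_j)] t^j and h_0(t) = (1 − λ/(n+1)) · Σ_{j=0}^{w} [(−w)_j (w+n+3)_j (λ−n)_j / (j! (n+2)_j (λ−n−1)_j)] t^j. Then the pair (h_0, h_1) satisfies system (D') with eigenvalue λ and system (E') with eigenvalue μ for all t ∈ (0,1). -/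
/-!
With `λ = -w(w+n+3)`, `h₁` is the terminating series `₂F₁(-w, w+n+3; n+1; t)`, whose coefficients
satisfy `a_{j+1} (j+1)(n+1+j) = a_j (j(j+n+3) + λ)`, and the Pochhammer quotients defining `h₀`
collapse to `b_j (n+1+j) = a_j (n+1-j-λ)`. These two recurrences give, coefficient by coefficient,
four polynomial identities: `(1-t) h₁' = h₁ - h₀`, the hypergeometric equation for `h₁`, an
equation for `h₀` forced by `h₁'`, and a first-order relation between `h₀'` and `h₁`. Each
equation of systems (D') and (E') is a linear combination of these.
-/

open Finset Polynomial

theorem mul_ascPochhammer_eval_add_one {R : Type*} [CommSemiring R] (x : R) (j : ℕ) :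
    x * (ascPochhammer R j).eval (x + 1) = (ascPochhammer R j).eval x * (x + j) := by
  rw [← ascPochhammer_succ_eval, ascPochhammer_succ_left]
  simp [eval_comp]

theorem Polynomial.coeff_sum_range_C_mul_X_pow {R : Type*} [Semiring R] {c : ℕ → R} {N : ℕ}
    (hc : ∀ k, N < k → c k = 0) (k : ℕ) :
    (∑ j ∈ range (N + 1), C (c j) * X ^ j).coeff k = c k := by
  simp only [finsetSum_coeff, coeff_C_mul_X_pow, sum_ite_eq, mem_range]
  split_ifs with hk
  · rfl
  · exact (hc k (by omega)).symm

theorem Polynomial.coeff_X_mul_derivative {R : Type*} [Semiring R] (p : R[X]) (k : ℕ) :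
    (X * derivative p).coeff k = k * p.coeff k := by
  cases k with
  | zero => simp
  | succ k => rw [coeff_X_mul, coeff_derivative, ← Nat.cast_succ, Nat.cast_comm]

theorem Polynomial.deriv_eval_eq {𝕜 : Type*} [NontriviallyNormedField 𝕜] (p : 𝕜[X]) :
    _root_.deriv (fun x => p.eval x) = fun x => p.derivative.eval x :=
  _root_.funext fun _ => p.deriv

section

variable (n w : ℕ) (lam : ℝ)

noncomputable def coeffOne (j : ℕ) : ℝ :=
  (ascPochhammer ℝ j).eval (-(w : ℝ)) * (ascPochhammer ℝ j).eval ((w : ℝ) + n + 3)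
    / ((j.factorial : ℝ) * (ascPochhammer ℝ j).eval ((n : ℝ) + 1))

noncomputable def coeffZero (j : ℕ) : ℝ :=
  (1 - lam / ((n : ℝ) + 1)) *
    ((ascPochhammer ℝ j).eval (-(w : ℝ)) * (ascPochhammer ℝ j).eval ((w : ℝ) + n + 3)
        * (ascPochhammer ℝ j).eval (lam - (n : ℝ))
      / ((j.factorial : ℝ) * (ascPochhammer ℝ j).eval ((n : ℝ) + 2)
        * (ascPochhammer ℝ j).eval (lam - (n : ℝ) - 1)))

variable {n w lam}

theorem coeffOne_eq_zero_of_lt {j : ℕ} (hj : w < j) : coeffOne n w j = 0 := by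
  simp [coeffOne, ascPochhammer_eval_neg_coe_nat_of_lt hj]

theorem coeffZero_eq_zero_of_lt {j : ℕ} (hj : w < j) : coeffZero n w lam j = 0 := by
  simp [coeffZero, ascPochhammer_eval_neg_coe_nat_of_lt hj]

theorem coeffOne_succ_mul (hlam : lam = -(w : ℝ) * ((w : ℝ) + n + 3)) (j : ℕ) :
    coeffOne n w (j + 1) * ((j + 1) * (n + 1 + j)) = coeffOne n w j * (j * (j + n + 3) + lam) := by
  have hpos : 0 < (ascPochhammer ℝ j).eval ((n : ℝ) + 1) := ascPochhammer_pos j _ (by positivity)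
  have hc : (n : ℝ) + 1 + j ≠ 0 := by positivity
  rw [coeffOne, coeffOne, ascPochhammer_succ_eval, ascPochhammer_succ_eval,
    ascPochhammer_succ_eval, Nat.factorial_succ]
  push_cast
  field_simp
  rw [hlam]
  ring

theorem coeffZero_mul (hlam : lam = -(w : ℝ) * ((w : ℝ) + n + 3)) (j : ℕ) :
    coeffZero n w lam j * (n + 1 + j) = coeffOne n w j * (n + 1 - j - lam) := by
  rcases lt_or_ge w j with hj | hj
  · simp [coeffZero_eq_zero_of_lt hj, coeffOne_eq_zero_of_lt hj]
  have hw : (j : ℝ) ≤ w := by exact_mod_cast hj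
  have hn : (n : ℝ) + 1 ≠ 0 := by positivity
  have hd : lam - n - 1 ≠ 0 := by nlinarith
  have hq : (ascPochhammer ℝ j).eval (lam - n - 1) ≠ 0 := by
    rw [Ne, ascPochhammer_eval_eq_zero_iff]
    rintro ⟨k, hk, hk'⟩
    have : (k : ℝ) < j := by exact_mod_cast hk
    nlinarith
  have hpos : 0 < (ascPochhammer ℝ j).eval ((n : ℝ) + 1) := ascPochhammer_pos j _ (by positivity)
  have hshift₁ := mul_ascPochhammer_eval_add_one ((n : ℝ) + 1) j
  have hshift₂ := mul_ascPochhammer_eval_add_one (lam - n - 1) j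
  rw [show (n : ℝ) + 1 + 1 = n + 2 by ring, mul_comm, ← eq_div_iff hn] at hshift₁
  rw [sub_add_cancel, mul_comm, ← eq_div_iff hd] at hshift₂
  rw [coeffZero, coeffOne, hshift₁, hshift₂]
  field_simp
  ring

variable (n w lam)

noncomputable def polyOne : ℝ[X] := ∑ j ∈ range (w + 1), C (coeffOne n w j) * X ^ j

noncomputable def polyZero : ℝ[X] := ∑ j ∈ range (w + 1), C (coeffZero n w lam j) * X ^ j

@[simp]
theorem coeff_polyOne (k : ℕ) : (polyOne n w).coeff k = coeffOne n w k :=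
  coeff_sum_range_C_mul_X_pow (fun _ => coeffOne_eq_zero_of_lt) k

@[simp]
theorem coeff_polyZero (k : ℕ) : (polyZero n w lam).coeff k = coeffZero n w lam k :=
  coeff_sum_range_C_mul_X_pow (fun _ => coeffZero_eq_zero_of_lt) k

theorem eval_polyOne (t : ℝ) :
    (polyOne n w).eval t = ∑ j ∈ range (w + 1),
      ((ascPochhammer ℝ j).eval (-(w : ℝ)) * (ascPochhammer ℝ j).eval ((w : ℝ) + n + 3))
        / ((j.factorial : ℝ) * (ascPochhammer ℝ j).eval ((n : ℝ) + 1)) * t ^ j := by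
  simp [polyOne, eval_finsetSum, coeffOne]

theorem eval_polyZero (t : ℝ) :
    (polyZero n w lam).eval t = (1 - lam / ((n : ℝ) + 1)) * ∑ j ∈ range (w + 1),
      ((ascPochhammer ℝ j).eval (-(w : ℝ)) * (ascPochhammer ℝ j).eval ((w : ℝ) + n + 3)
          * (ascPochhammer ℝ j).eval (lam - (n : ℝ)))
        / ((j.factorial : ℝ) * (ascPochhammer ℝ j).eval ((n : ℝ) + 2)
          * (ascPochhammer ℝ j).eval (lam - (n : ℝ) - 1)) * t ^ j := by
  simp [polyZero, eval_finsetSum, coeffZero, mul_sum, mul_assoc]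

variable {n w lam}

/- The identities below are written with the Euler operator `θ = X * derivative`, which multiplies
the `k`-th coefficient by `k`; `X * derivative (X * derivative p)` is `θ² p = X² p'' + X p'`. -/

theorem polyOne_sub_polyZero (hlam : lam = -(w : ℝ) * ((w : ℝ) + n + 3)) :
    polyOne n w - polyZero n w lam = derivative (polyOne n w) - X * derivative (polyOne n w) := by
  ext k
  have hc : (n : ℝ) + 1 + k ≠ 0 := by positivity
  simp only [coeff_sub, coeff_X_mul_derivative, coeff_derivative, coeff_polyOne, coeff_polyZero]
  refine mul_right_cancel₀ hc ?_
  linear_combination -coeffOne_succ_mul hlam k - coeffZero_mul hlam k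

theorem polyOne_hypergeometric (hlam : lam = -(w : ℝ) * ((w : ℝ) + n + 3)) :
    X * derivative (derivative (polyOne n w)) + C ((n : ℝ) + 1) * derivative (polyOne n w) =
      X * derivative (X * derivative (polyOne n w))
        + C ((n : ℝ) + 3) * (X * derivative (polyOne n w)) + C lam * polyOne n w := by
  ext k
  simp only [coeff_add, coeff_C_mul, coeff_X_mul_derivative, coeff_derivative, coeff_polyOne]
  linear_combination coeffOne_succ_mul hlam k

theorem polyZero_hypergeometric_add_derivative_polyOne
    (hlam : lam = -(w : ℝ) * ((w : ℝ) + n + 3)) :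
    X * derivative (derivative (polyZero n w lam)) + C ((n : ℝ) + 2) * derivative (polyZero n w lam)
        + derivative (polyOne n w) =
      X * derivative (X * derivative (polyZero n w lam))
        + C ((n : ℝ) + 3) * (X * derivative (polyZero n w lam)) + C lam * polyZero n w lam := by
  ext k
  have hb := coeffZero_mul hlam k
  have hb' := coeffZero_mul hlam (k + 1)
  have hc : (n : ℝ) + 1 + k ≠ 0 := by positivity
  simp only [coeff_add, coeff_C_mul, coeff_X_mul_derivative, coeff_derivative, coeff_polyOne,
    coeff_polyZero]
  push_cast at hb'
  refine mul_right_cancel₀ hc ?_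
  linear_combination ((k + 1) * (n + 1 + k)) * hb' + (n + 1 - k - lam) * coeffOne_succ_mul hlam k
    - (k * (k + n + 3) + lam) * hb

theorem polyOne_polyZero_derivative_relation (hlam : lam = -(w : ℝ) * ((w : ℝ) + n + 3)) :
    C ((n : ℝ) + 2) * (X * derivative (polyOne n w)) + X * derivative (polyZero n w lam)
        + C lam * polyOne n w =
      C ((n : ℝ) + 1) * derivative (polyOne n w) := by
  ext k
  have hc : (n : ℝ) + 1 + k ≠ 0 := by positivity
  simp only [coeff_add, coeff_C_mul, coeff_X_mul_derivative, coeff_derivative, coeff_polyOne,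
    coeff_polyZero]
  refine mul_right_cancel₀ hc ?_
  linear_combination k * coeffZero_mul hlam k - (n + 1) * coeffOne_succ_mul hlam k

end

/-- Case `ℓ = 1`, `k = 0`, `n ≥ 0`: with `λ = −w(w+n+3)` and `μ = λ(n−1)`, the pair
`h₁(t) = ₂F₁(−w, w+n+3; n+1; t)` and
`h₀(t) = (1 − λ/(n+1)) · ₃F₂(−w, w+n+3, λ−n; n+2, λ−n−1; t)`
satisfies system (D′) with eigenvalue `λ` and system (E′) with eigenvalue `μ` on `(0,1)`. -/
theorem stmt13 (n w : ℕ) (lam mu : ℝ)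
    (hlam : lam = -(w : ℝ) * ((w : ℝ) + n + 3))
    (hmu : mu = lam * ((n : ℝ) - 1))
    (h : ℕ → ℝ → ℝ)
    (h1def : ∀ t : ℝ, h 1 t =
      ∑ j ∈ Finset.range (w + 1),
        ((ascPochhammer ℝ j).eval (-(w : ℝ)) * (ascPochhammer ℝ j).eval ((w : ℝ) + n + 3))
          / ((j.factorial : ℝ) * (ascPochhammer ℝ j).eval ((n : ℝ) + 1)) * t ^ j)
    (h0def : ∀ t : ℝ, h 0 t =
      (1 - lam / ((n : ℝ) + 1)) *
        ∑ j ∈ Finset.range (w + 1),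
          ((ascPochhammer ℝ j).eval (-(w : ℝ)) * (ascPochhammer ℝ j).eval ((w : ℝ) + n + 3)
              * (ascPochhammer ℝ j).eval (lam - (n : ℝ)))
            / ((j.factorial : ℝ) * (ascPochhammer ℝ j).eval ((n : ℝ) + 2)
              * (ascPochhammer ℝ j).eval (lam - (n : ℝ) - 1)) * t ^ j) :
    (∀ i ≤ 1, ∀ t : ℝ, 0 < t → t < 1 →
      t * (1 - t) * deriv (deriv (h i)) t
        - (((n : ℝ) + 1 - i + 3) * t - ((n : ℝ) + 1 - i + 1)) * deriv (h i) t
        + ((1 : ℝ) - i) * ((i : ℝ) + 1) * (h (i + 1) t - h i t) / (1 - t)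
        - (i : ℝ) * ((1 : ℝ) - i + 1) * t * (h i t - h (i - 1) t) / (1 - t)
        = lam * h i t) ∧
    (∀ i ≤ 1, ∀ t : ℝ, 0 < t → t < 1 →
      ((n : ℝ) - 1 + 3 * i) * t * (1 - t) * deriv (deriv (h i)) t
        - 3 * ((i : ℝ) + 1) * ((1 : ℝ) - i) * deriv (h (i + 1)) t
        + ((n : ℝ) - 1 + 3 * i) * (((n : ℝ) + 1 - i + 1) - ((n : ℝ) + 1 - i + 3) * t)
            * deriv (h i) t
        + 3 * (i : ℝ) * ((1 : ℝ) - i + 1) * t * deriv (h (i - 1)) t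
        + ((n : ℝ) + 2 - 3 * i) * ((i : ℝ) + 1) * ((1 : ℝ) - i)
            * (h (i + 1) t - h i t) / (1 - t)
        - ((n : ℝ) + 2 - 3 * i) * (i : ℝ) * ((1 : ℝ) - i + 1)
            * (h i t - h (i - 1) t) / (1 - t)
        - (2 * (n : ℝ) + 1 + 3) * (i : ℝ) * ((1 : ℝ) - i + 1) * (h i t - h (i - 1) t)
        = mu * h i t) := by
  subst hmu
  have hp : h 1 = fun t => (polyOne n w).eval t := funext fun t => by rw [h1def, eval_polyOne]
  have hq : h 0 = fun t => (polyZero n w lam).eval t := funext fun t => by rw [h0def, eval_polyZero]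
  have hsub := fun t => congrArg (eval t) (polyOne_sub_polyZero hlam)
  have hOne := fun t => congrArg (eval t) (polyOne_hypergeometric hlam)
  have hZero := fun t => congrArg (eval t) (polyZero_hypergeometric_add_derivative_polyOne hlam)
  have hrel := fun t => congrArg (eval t) (polyOne_polyZero_derivative_relation hlam)
  simp only [eval_add, eval_sub, eval_mul, eval_X, eval_C, derivative_mul, derivative_X,
    one_mul] at hsub hOne hZero hrel
  have hdiv : ∀ t < 1, (h 1 t - h 0 t) / (1 - t) = deriv (h 1) t := fun t ht => by
    rw [div_eq_iff (sub_ne_zero.2 ht.ne'), hp, hq, deriv_eval_eq]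
    linear_combination hsub t
  refine ⟨fun i hi t _ ht => ?_, fun i hi t _ ht => ?_⟩ <;> have hd := hdiv t ht <;>
    interval_cases i <;> simp [hp, hq, deriv_eval_eq] at hd ⊢
  · linear_combination hZero t + hd
  · linear_combination hOne t - t * hd
  · linear_combination (n - 1 : ℝ) * hZero t + (n + 2 : ℝ) * hd
  · linear_combination (n + 2 : ℝ) * hOne t + 3 * hrel t - (2 * n + 4 : ℝ) * hsub t
      - (n - 1 : ℝ) * hd
end

section
/- Let n ∈ ℤ, ℓ ≥ 0 an integer, λ ∈ ℂ, and let (H_j)_{j∈ℤ} be a family of vectors in ℂ^{ℓ+1}, with components H_{i,j} (0 ≤ i ≤ ℓ), such that H_j = 0 for all sufficiently negative j, the recursion identity [(j−1)(j−2) + (j−1)A₁ − B₁ + λ]H_{j−1} − [2j(j−1) + j(A₀+A₁) − B₀ + λ]H_j + (j+1)(jI + A₀)H_{j+1} = 0 holds for every j ∈ ℤ, and H_{i,j} = 0 whenever j < −⌊(n+ℓ−i)/2⌋. Then H_j = 0 for all j < 0; moreover, if n+ℓ < 0 then H_j = 0 for all j < −n−ℓ. -/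
open Matrix

/-- The last matrix in the recursion is diagonal. -/
lemma lastDiag (n : ℤ) (ℓ : ℕ) (c : ℂ) :
    (c + 1) • (c • (1 : Matrix (Fin (ℓ + 1)) (Fin (ℓ + 1)) ℂ) + matA0 n ℓ)
      = Matrix.diagonal (fun k : Fin (ℓ + 1) => (c + 1) * (c + 1 + n + ℓ - k)) := by
  ext a b
  by_cases hab : a = b <;>
    simp only [matA0, Matrix.smul_apply, Matrix.add_apply, Matrix.one_apply,
      Matrix.diagonal_apply, hab, if_true, if_false, eq_self_iff_true, smul_eq_mul] <;> ring

/-- A two-sided formal-power-series solution of the recursion which vanishes for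
sufficiently negative indices, and whose components vanish below the orders forced by
the spherical function, must be supported in degrees `≥ 0`; moreover if `n + ℓ < 0`
it is supported in degrees `≥ −n−ℓ`. -/
theorem stmt16 (n : ℤ) (ℓ : ℕ) (lam : ℂ) (H : ℤ → Fin (ℓ + 1) → ℂ)
    (hvanish : ∃ N : ℤ, ∀ j : ℤ, j < N → H j = 0)
    (hrec : ∀ j : ℤ,
      (((((j : ℂ) - 1) * ((j : ℂ) - 2) + lam) • (1 : Matrix (Fin (ℓ + 1)) (Fin (ℓ + 1)) ℂ)
          + ((j : ℂ) - 1) • matA1 n ℓ - matB1 ℓ).mulVec (H (j - 1)))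
        - (((2 * (j : ℂ) * ((j : ℂ) - 1) + lam) • (1 : Matrix (Fin (ℓ + 1)) (Fin (ℓ + 1)) ℂ)
          + (j : ℂ) • (matA0 n ℓ + matA1 n ℓ) - matB0 ℓ).mulVec (H j))
        + ((((j : ℂ) + 1) • ((j : ℂ) • (1 : Matrix (Fin (ℓ + 1)) (Fin (ℓ + 1)) ℂ)
          + matA0 n ℓ)).mulVec (H (j + 1))) = 0)
    (hzero : ∀ (i : Fin (ℓ + 1)) (j : ℤ),
      j < -((n + (ℓ : ℤ) - (i : ℕ)).fdiv 2) → H j i = 0) :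
    (∀ j : ℤ, j < 0 → H j = 0) ∧
      (n + (ℓ : ℤ) < 0 → ∀ j : ℤ, j < -n - ℓ → H j = 0) := by
  obtain ⟨N, hN⟩ := hvanish
  set T : ℤ := if n + (ℓ : ℤ) < 0 then -n - ℓ else 0 with hT
  have hT0 : 0 ≤ T := by
    rw [hT]; split <;> omega
  -- key step: if everything below j vanishes and j < T, then H j = 0
  have step : ∀ j : ℤ, (∀ k : ℤ, k < j → H k = 0) → j < T → H j = 0 := by
    intro j hz hjT
    have h1 := hrec (j - 1)
    rw [show j - 1 - 1 = j - 2 by ring, show j - 1 + 1 = j by ring,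
      hz (j - 2) (by omega), hz (j - 1) (by omega)] at h1
    simp only [Matrix.mulVec_zero, sub_zero, zero_add] at h1
    push_cast at h1
    rw [lastDiag n ℓ ((j : ℂ) - 1)] at h1
    funext i
    have h2 := congrFun h1 i
    simp only [Matrix.mulVec_diagonal, Pi.zero_apply] at h2
    by_contra hne
    -- from hzero : j ≥ -fdiv (n+ℓ-i) 2
    have hlb : ¬ (j < -((n + (ℓ : ℤ) - (i : ℕ)).fdiv 2)) := fun h => hne (hzero i j h)
    have hfd : (n + (ℓ : ℤ) - (i : ℕ)).fdiv 2 = (n + (ℓ : ℤ) - (i : ℕ)) / 2 :=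
      Int.fdiv_eq_ediv_of_nonneg _ (by norm_num)
    rw [hfd] at hlb
    -- from h2 : j = 0 or j = i - n - ℓ
    rcases mul_eq_zero.mp h2 with h3 | h3
    swap
    · exact hne h3
    rcases mul_eq_zero.mp h3 with h4 | h4
    · -- (j : ℂ) = 0, i.e. j = 0
      have hj0 : j = 0 := by
        have h5 : (j : ℂ) = ((0 : ℤ) : ℂ) := by push_cast; linear_combination h4
        exact_mod_cast h5
      subst hj0
      -- then T = -n-ℓ with n+ℓ<0, so fdiv (n+ℓ-i) 2 < 0, contradicting hlb
      have hnl : n + (ℓ : ℤ) < 0 := by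
        by_contra hc
        rw [hT, if_neg hc] at hjT
        omega
      have : n + (ℓ : ℤ) - (i : ℕ) < 0 := by
        have := (i : ℕ); omega
      omega
    · -- j = i - n - ℓ
      have hji : j = (i : ℕ) - n - ℓ := by
        have : ((j : ℂ) - 1 + 1 + n + ℓ - i) = 0 := h4
        have h5 : ((j + n + (ℓ : ℤ) - (i : ℕ) : ℤ) : ℂ) = 0 := by push_cast; linear_combination this
        have h6 : (j + n + (ℓ : ℤ) - (i : ℕ) : ℤ) = 0 := by exact_mod_cast h5
        omega
      -- hlb : -fdiv ≤ j = -(n+ℓ-i); hence n+ℓ-i ≤ 0 and j ≥ 0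
      have hm : n + (ℓ : ℤ) - (i : ℕ) ≤ 0 := by omega
      -- j ≥ 0, and j ≥ i - n - ℓ ≥ -n - ℓ; contradict j < T in both cases
      rw [hT] at hjT
      split at hjT <;> omega
  -- strong induction bounded below by N
  have main : ∀ m : ℕ, ∀ j : ℤ, j < T → j < N + m → H j = 0 := by
    intro m
    induction m with
    | zero => intro j hjT hjN; exact hN j (by omega)
    | succ m ih =>
      intro j hjT hjN
      by_cases hc : j < N + m
      · exact ih j hjT hc
      · exact step j (fun k hk => ih k (by omega) (by omega)) hjT
  have key : ∀ j : ℤ, j < T → H j = 0 := by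
    intro j hjT
    obtain ⟨m, hm⟩ : ∃ m : ℕ, j < N + m := ⟨(j - N + 1).toNat, by omega⟩
    exact main m j hjT hm
  constructor
  · intro j hj; exact key j (by omega)
  · intro hn j hj
    apply key
    rw [hT, if_pos hn]
    exact hj
end
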